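/- For all positive integers d and r, the complex dimension of the linear span of the CPTP maps from M_d(ℂ) to M_r(ℂ) (equivalently, of the operator system S(d,r)) equals d²r² − d² + 1. -/

import Mathlib

open scoped Kronecker ComplexOrder Matrix

noncomputable section

/-- Apply a map `φ` between matrix algebras blockwise to a block matrix. -/
def mapBlocks {m A B : Type*} (φ : Matrix A A ℂ → Matrix B B ℂ)
    (M : Matrix (m × A) (m × A) ℂ) : Matrix (m × B) (m × B) ℂ :=
  Matrix.of fun p q => φ (Matrix.of fun a b => M (p.1, a) (q.1, b)) p.2 q.2

/-- Complete positivity: every blockwise application preserves positive semidefiniteness. -/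
def IsCP {A B : Type*} [Fintype A] [Fintype B] (φ : Matrix A A ℂ → Matrix B B ℂ) : Prop :=
  ∀ (n : ℕ) (M : Matrix (Fin n × A) (Fin n × A) ℂ), M.PosSemidef → (mapBlocks φ M).PosSemidef

/-- CPTP: completely positive and trace preserving. -/
def IsCPTP {A B : Type*} [Fintype A] [Fintype B] (φ : Matrix A A ℂ →ₗ[ℂ] Matrix B B ℂ) : Prop :=
  IsCP ⇑φ ∧ ∀ X, (φ X).trace = X.trace

/-- The Choi matrix of a linear map, `C_φ = Σ_{ij} E_{ij} ⊗ φ(E_{ij})`. -/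
def choi {d r : ℕ} (φ : Matrix (Fin d) (Fin d) ℂ →ₗ[ℂ] Matrix (Fin r) (Fin r) ℂ) :
    Matrix (Fin d × Fin r) (Fin d × Fin r) ℂ :=
  Matrix.of fun p q => φ (Matrix.single p.1 q.1 1) p.2 q.2

/-- The trace of the `(i,j)` block of a block matrix. -/
def btr {d r : ℕ} (C : Matrix (Fin d × Fin r) (Fin d × Fin r) ℂ) (i j : Fin d) : ℂ :=
  ∑ k : Fin r, C (i, k) (j, k)

lemma btr_add {d r : ℕ} (C D : Matrix (Fin d × Fin r) (Fin d × Fin r) ℂ) (i j : Fin d) :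
    btr (C + D) i j = btr C i j + btr D i j := by
  simp [btr, Finset.sum_add_distrib]

lemma btr_smul {d r : ℕ} (c : ℂ) (C : Matrix (Fin d × Fin r) (Fin d × Fin r) ℂ) (i j : Fin d) :
    btr (c • C) i j = c * btr C i j := by
  simp [btr, Finset.mul_sum]

/-- The operator system `S(d,r)`: block matrices whose diagonal blocks all have
the same trace and whose off-diagonal blocks have trace zero. -/
def Sset (d r : ℕ) : Set (Matrix (Fin d × Fin r) (Fin d × Fin r) ℂ) :=
  {C | (∀ i j : Fin d, btr C i i = btr C j j) ∧ ∀ i j : Fin d, i ≠ j → btr C i j = 0}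

/-- `S(d,r)` as a subspace. -/
def Ssub (d r : ℕ) : Submodule ℂ (Matrix (Fin d × Fin r) (Fin d × Fin r) ℂ) where
  carrier := Sset d r
  add_mem' := by
    rintro C D ⟨hC1, hC2⟩ ⟨hD1, hD2⟩
    refine ⟨fun i j => ?_, fun i j hij => ?_⟩
    · rw [btr_add, btr_add, hC1 i j, hD1 i j]
    · rw [btr_add, hC2 i j hij, hD2 i j hij, add_zero]
  zero_mem' := by
    refine ⟨fun i j => ?_, fun i j _ => ?_⟩ <;> simp [btr]
  smul_mem' := by
    rintro c C ⟨hC1, hC2⟩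
    refine ⟨fun i j => ?_, fun i j hij => ?_⟩
    · rw [btr_smul, btr_smul, hC1 i j]
    · rw [btr_smul, hC2 i j hij, mul_zero]

/-- The partial trace over the second factor. -/
def ptrace {d r : ℕ} (C : Matrix (Fin d × Fin r) (Fin d × Fin r) ℂ) : Matrix (Fin d) (Fin d) ℂ :=
  Matrix.of fun i j => btr C i j

/-!
The Choi map `ψ ↦ ∑ E_ij ⊗ ψ(E_ij)` is a linear isomorphism, and a positive semidefinite matrix
`C` with partial trace `1` is the Choi matrix of a channel, since applying that channel blockwise to
`M` compresses `M ⊗ₖ C`. A self-adjoint `X ∈ S(d,r)` is the difference of `X + s • 1` and `s • 1`,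
which for large `s` are positive multiples of such matrices; splitting a general element into real
and imaginary parts shows that the Choi matrices of channels span `S(d,r)`. Finally `S(d,r)` is the
preimage of the scalars `ℂ • 1` under the surjective partial trace, so its dimension is
`(d²r² - d²) + 1`.
-/

open Module

theorem finrank_comap_of_surjective {K V W : Type*} [DivisionRing K] [AddCommGroup V]
    [Module K V] [AddCommGroup W] [Module K W] [FiniteDimensional K V] {f : V →ₗ[K] W}
    (hf : Function.Surjective f) (p : Submodule K W) :
    finrank K (p.comap f) = finrank K p + finrank K (LinearMap.ker f) := by
  have : FiniteDimensional K W := Module.Finite.of_surjective f hf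
  have hV := LinearMap.finrank_range_add_finrank_ker f
  have hVp := LinearMap.finrank_range_add_finrank_ker (p.mkQ ∘ₗ f)
  have hW := Submodule.finrank_quotient_add_finrank p
  rw [LinearMap.range_eq_top.2 hf, finrank_top] at hV
  have hsurj : Function.Surjective (p.mkQ ∘ₗ f) := by
    rw [LinearMap.coe_comp]; exact (Submodule.mkQ_surjective p).comp hf
  rw [LinearMap.range_eq_top.2 hsurj, finrank_top,
    LinearMap.ker_comp, Submodule.ker_mkQ] at hVp
  omega

lemma Matrix.exists_posSemidef_add_smul_one {n : Type*} [Fintype n] [DecidableEq n]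
    {X : Matrix n n ℂ} (hX : IsSelfAdjoint X) : ∃ s : ℝ, (X + (s : ℂ) • 1).PosSemidef := by
  open scoped Matrix.Norms.L2Operator MatrixOrder in
  refine ⟨‖X‖, ?_⟩
  have hle := hX.neg_algebraMap_norm_le_self
  rw [Algebra.algebraMap_eq_smul_one, ← sub_nonneg] at hle
  rw [← Matrix.nonneg_iff_posSemidef]
  simpa [sub_eq_add_neg, add_comm] using hle

section Choi

variable {d r : ℕ}

def ofChoi (C : Matrix (Fin d × Fin r) (Fin d × Fin r) ℂ) :
    Matrix (Fin d) (Fin d) ℂ →ₗ[ℂ] Matrix (Fin r) (Fin r) ℂ where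
  toFun X := Matrix.of fun k l => ∑ a, ∑ b, X a b * C (a, k) (b, l)
  map_add' X Y := by ext; simp [add_mul, Finset.sum_add_distrib]
  map_smul' c X := by ext; simp [Finset.mul_sum, mul_assoc]

lemma choi_ofChoi (C : Matrix (Fin d × Fin r) (Fin d × Fin r) ℂ) : choi (ofChoi C) = C := by
  ext ⟨i, k⟩ ⟨j, l⟩
  simp [choi, ofChoi, Matrix.single_apply, ite_and]

variable (d r) in
def choiLinearMap :
    (Matrix (Fin d) (Fin d) ℂ →ₗ[ℂ] Matrix (Fin r) (Fin r) ℂ) →ₗ[ℂ]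
      Matrix (Fin d × Fin r) (Fin d × Fin r) ℂ where
  toFun := choi
  map_add' _ _ := rfl
  map_smul' _ _ := rfl

lemma choiLinearMap_injective : Function.Injective (choiLinearMap d r) := by
  intro φ ψ h
  refine (Matrix.stdBasis ℂ (Fin d) (Fin d)).ext fun ⟨i, j⟩ => ?_
  ext k l
  rw [Matrix.stdBasis_eq_single]
  exact congr_fun₂ h (i, k) (j, l)

lemma mapBlocks_ofChoi {n : ℕ} (C : Matrix (Fin d × Fin r) (Fin d × Fin r) ℂ)
    (M : Matrix (Fin n × Fin d) (Fin n × Fin d) ℂ) :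
    mapBlocks (ofChoi C) M =
      let V : Matrix ((Fin n × Fin d) × (Fin d × Fin r)) (Fin n × Fin r) ℂ :=
        Matrix.of fun x y => if x.1.1 = y.1 ∧ x.1.2 = x.2.1 ∧ x.2.2 = y.2 then 1 else 0
      Vᴴ * (M ⊗ₖ C) * V := by
  ext ⟨p, k⟩ ⟨q, l⟩
  simp only [mapBlocks, ofChoi, LinearMap.coe_mk, AddHom.coe_mk, Matrix.of_apply, ite_and,
    Matrix.mul_apply, Matrix.conjTranspose_apply, RCLike.star_def, apply_ite (starRingEnd ℂ),
    map_one, map_zero, Matrix.kroneckerMap_apply, ite_mul, one_mul, zero_mul,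
    Fintype.sum_prod_type, Finset.sum_ite_irrel, Finset.sum_ite_eq', Finset.mem_univ, ↓reduceIte,
    Finset.sum_const_zero, Finset.sum_ite_eq, mul_ite, mul_one, mul_zero]
  exact Finset.sum_comm

lemma isCP_ofChoi {C : Matrix (Fin d × Fin r) (Fin d × Fin r) ℂ} (hC : C.PosSemidef) :
    IsCP (ofChoi C) := fun _ M hM => by
  rw [mapBlocks_ofChoi]
  exact (hM.kronecker hC).conjTranspose_mul_mul_same _

lemma trace_ofChoi (C : Matrix (Fin d × Fin r) (Fin d × Fin r) ℂ) (X : Matrix (Fin d) (Fin d) ℂ) :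
    (ofChoi C X).trace = ∑ a, ∑ b, X a b * ptrace C a b := by
  simp only [Matrix.trace, Matrix.diag, ofChoi, ptrace, btr, LinearMap.coe_mk, AddHom.coe_mk,
    Matrix.of_apply, Finset.mul_sum]
  rw [Finset.sum_comm]
  exact Finset.sum_congr rfl fun _ _ => Finset.sum_comm

lemma isCPTP_ofChoi {C : Matrix (Fin d × Fin r) (Fin d × Fin r) ℂ} (hC : C.PosSemidef)
    (hC₁ : ptrace C = 1) : IsCPTP (ofChoi C) :=
  ⟨isCP_ofChoi hC, fun X => by
    rw [trace_ofChoi, hC₁]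
    simp [Matrix.one_apply, Matrix.trace]⟩

lemma ptrace_choi (ψ : Matrix (Fin d) (Fin d) ℂ →ₗ[ℂ] Matrix (Fin r) (Fin r) ℂ) :
    ptrace (choi ψ) = Matrix.of fun i j => (ψ (Matrix.single i j 1)).trace := rfl

lemma IsCPTP.ptrace_choi_eq_one {ψ : Matrix (Fin d) (Fin d) ℂ →ₗ[ℂ] Matrix (Fin r) (Fin r) ℂ}
    (hψ : IsCPTP ψ) : ptrace (choi ψ) = 1 := by
  ext i j
  rw [ptrace_choi, Matrix.of_apply, hψ.2]
  obtain rfl | hij := eq_or_ne i j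
  · simp [Matrix.trace_single_eq_same]
  · simp [Matrix.trace_single_eq_of_ne, hij]

end Choi

section PartialTrace

variable {d r : ℕ}

variable (d r) in
@[simps]
def ptraceLinearMap : Matrix (Fin d × Fin r) (Fin d × Fin r) ℂ →ₗ[ℂ] Matrix (Fin d) (Fin d) ℂ where
  toFun := ptrace
  map_add' C D := by ext; exact btr_add C D _ _
  map_smul' c C := by ext; exact btr_smul c C _ _

lemma ptrace_kronecker (X : Matrix (Fin d) (Fin d) ℂ) (Y : Matrix (Fin r) (Fin r) ℂ) :
    ptrace (X ⊗ₖ Y) = Y.trace • X := by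
  ext i j
  simp [ptrace, btr, Matrix.trace, Finset.mul_sum, mul_comm]

lemma ptrace_one : ptrace (1 : Matrix (Fin d × Fin r) (Fin d × Fin r) ℂ) = (r : ℂ) • 1 := by
  rw [← Matrix.one_kronecker_one, ptrace_kronecker, Matrix.trace_one, Fintype.card_fin]

lemma ptrace_conjTranspose (C : Matrix (Fin d × Fin r) (Fin d × Fin r) ℂ) :
    ptrace Cᴴ = (ptrace C)ᴴ := by
  ext i j
  simp [ptrace, btr, Matrix.conjTranspose_apply]

lemma ptraceLinearMap_surjective (hr : 0 < r) : Function.Surjective (ptraceLinearMap d r) :=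
  fun X => ⟨X ⊗ₖ Matrix.single ⟨0, hr⟩ ⟨0, hr⟩ 1, by
    simp [ptraceLinearMap, ptrace_kronecker, Matrix.trace_single_eq_same]⟩

lemma mem_Ssub_iff (hd : 0 < d) {C : Matrix (Fin d × Fin r) (Fin d × Fin r) ℂ} :
    C ∈ Ssub d r ↔ ∃ c : ℂ, ptrace C = c • 1 := by
  constructor
  · rintro ⟨hdiag, hoff⟩
    refine ⟨btr C ⟨0, hd⟩ ⟨0, hd⟩, Matrix.ext fun i j => ?_⟩
    obtain rfl | hij := eq_or_ne i j
    · simp [ptrace, hdiag i ⟨0, hd⟩]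
    · simp [ptrace, hoff i j hij, hij]
  · rintro ⟨c, hc⟩
    have hbtr (i j : Fin d) : btr C i j = (c • 1 : Matrix (Fin d) (Fin d) ℂ) i j :=
      congr_fun₂ hc i j
    exact ⟨fun i j => by simp [hbtr], fun i j hij => by simp [hbtr, hij]⟩

lemma Ssub_eq_comap (hd : 0 < d) :
    Ssub d r = (ℂ ∙ (1 : Matrix (Fin d) (Fin d) ℂ)).comap (ptraceLinearMap d r) := by
  ext C
  simp [mem_Ssub_iff hd, Submodule.mem_span_singleton, ptraceLinearMap, eq_comm]

lemma star_mem_Ssub (hd : 0 < d) {C : Matrix (Fin d × Fin r) (Fin d × Fin r) ℂ}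
    (hC : C ∈ Ssub d r) : star C ∈ Ssub d r := by
  obtain ⟨c, hc⟩ := (mem_Ssub_iff hd).1 hC
  refine (mem_Ssub_iff hd).2 ⟨star c, ?_⟩
  rw [Matrix.star_eq_conjTranspose, ptrace_conjTranspose, hc, Matrix.conjTranspose_smul,
    Matrix.conjTranspose_one]

lemma one_mem_Ssub : (1 : Matrix (Fin d × Fin r) (Fin d × Fin r) ℂ) ∈ Ssub d r :=
  ⟨fun i j => by simp [btr], fun i j hij => by simp [btr, hij]⟩

end PartialTrace

lemma finrank_Ssub {d r : ℕ} (hd : 0 < d) (hr : 0 < r) :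
    finrank ℂ (Ssub d r) = d ^ 2 * r ^ 2 - d ^ 2 + 1 := by
  have : Nonempty (Fin d) := ⟨⟨0, hd⟩⟩
  have hker := LinearMap.finrank_range_add_finrank_ker (ptraceLinearMap d r)
  rw [LinearMap.range_eq_top.2 (ptraceLinearMap_surjective hr), finrank_top,
    finrank_matrix, finrank_matrix] at hker
  rw [Ssub_eq_comap hd, finrank_comap_of_surjective (ptraceLinearMap_surjective hr),
    finrank_span_singleton one_ne_zero]
  simp only [Fintype.card_fin, Fintype.card_prod, finrank_self, mul_one] at hker
  have : d ^ 2 * r ^ 2 = d ^ 2 + finrank ℂ (LinearMap.ker (ptraceLinearMap d r)) := by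
    linear_combination -hker
  omega

section Span

variable {d r : ℕ}

variable (d r) in
def choiSpanCPTP : Submodule ℂ (Matrix (Fin d × Fin r) (Fin d × Fin r) ℂ) :=
  (Submodule.span ℂ {ψ | IsCPTP ψ}).map (choiLinearMap d r)

lemma mem_choiSpanCPTP_of_posSemidef_of_ptrace_eq_smul_one
    {C : Matrix (Fin d × Fin r) (Fin d × Fin r) ℂ} (hC : C.PosSemidef) {c : ℂ} (hc : 0 < c)
    (hCc : ptrace C = c • 1) : C ∈ choiSpanCPTP d r := by
  have hnorm : c⁻¹ • C ∈ choiSpanCPTP d r := by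
    rw [← choi_ofChoi (c⁻¹ • C)]
    refine Submodule.mem_map_of_mem (Submodule.subset_span (isCPTP_ofChoi ?_ ?_))
    · exact hC.smul (inv_pos.2 hc).le
    · rw [← ptraceLinearMap_apply, map_smul, ptraceLinearMap_apply, hCc, smul_smul,
        inv_mul_cancel₀ hc.ne', one_smul]
  simpa [smul_smul, hc.ne'] using Submodule.smul_mem _ c hnorm

lemma one_mem_choiSpanCPTP (hr : 0 < r) : 1 ∈ choiSpanCPTP d r :=
  mem_choiSpanCPTP_of_posSemidef_of_ptrace_eq_smul_one Matrix.PosSemidef.one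
    (Nat.cast_pos.2 hr) ptrace_one

lemma mem_choiSpanCPTP_of_posSemidef (hd : 0 < d) (hr : 0 < r)
    {C : Matrix (Fin d × Fin r) (Fin d × Fin r) ℂ} (hC : C.PosSemidef) (hCS : C ∈ Ssub d r) :
    C ∈ choiSpanCPTP d r := by
  obtain ⟨c, hc⟩ := (mem_Ssub_iff hd).1 hCS
  have hc₀ : 0 ≤ c := by
    have : c = ∑ k, C (⟨0, hd⟩, k) (⟨0, hd⟩, k) := by
      simpa [ptrace, btr] using (congr_fun₂ hc ⟨0, hd⟩ ⟨0, hd⟩).symm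
    exact this ▸ Finset.sum_nonneg fun _ _ => hC.diag_nonneg
  -- the shift makes the block trace `c + r` strictly positive, even when `c = 0`
  have hshift : C + 1 ∈ choiSpanCPTP d r := by
    refine mem_choiSpanCPTP_of_posSemidef_of_ptrace_eq_smul_one (hC.add .one)
      (add_pos_of_nonneg_of_pos hc₀ (Nat.cast_pos.2 hr)) ?_
    rw [← ptraceLinearMap_apply, map_add, ptraceLinearMap_apply, ptraceLinearMap_apply, hc,
      ptrace_one, add_smul]
  simpa using Submodule.sub_mem _ hshift (one_mem_choiSpanCPTP hr)

lemma mem_choiSpanCPTP_of_isSelfAdjoint (hd : 0 < d) (hr : 0 < r)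
    {X : Matrix (Fin d × Fin r) (Fin d × Fin r) ℂ} (hX : IsSelfAdjoint X) (hXS : X ∈ Ssub d r) :
    X ∈ choiSpanCPTP d r := by
  obtain ⟨s, hs⟩ := Matrix.exists_posSemidef_add_smul_one hX
  have hsS : X + (s : ℂ) • 1 ∈ Ssub d r := add_mem hXS (Submodule.smul_mem _ _ one_mem_Ssub)
  simpa using Submodule.sub_mem _ (mem_choiSpanCPTP_of_posSemidef hd hr hs hsS)
    (Submodule.smul_mem _ (s : ℂ) (one_mem_choiSpanCPTP hr))

open ComplexStarModule in
lemma choiSpanCPTP_eq_Ssub (hd : 0 < d) (hr : 0 < r) : choiSpanCPTP d r = Ssub d r := by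
  refine le_antisymm ?_ fun C hC => ?_
  · rw [choiSpanCPTP, Submodule.map_le_iff_le_comap, Submodule.span_le]
    exact fun ψ hψ => (mem_Ssub_iff hd).2 ⟨1, by rw [one_smul]; exact hψ.ptrace_choi_eq_one⟩
  · have hre : (ℜ C : Matrix _ _ ℂ) ∈ Ssub d r := by
      rw [realPart_apply_coe]
      exact Submodule.smul_of_tower_mem _ _ (add_mem hC (star_mem_Ssub hd hC))
    have him : (ℑ C : Matrix _ _ ℂ) ∈ Ssub d r := by
      rw [imaginaryPart_apply_coe]
      exact Submodule.smul_mem _ _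
        (Submodule.smul_of_tower_mem _ _ (sub_mem hC (star_mem_Ssub hd hC)))
    rw [← realPart_add_I_smul_imaginaryPart C]
    exact add_mem (mem_choiSpanCPTP_of_isSelfAdjoint hd hr (ℜ C).2 hre)
      (Submodule.smul_mem _ _ (mem_choiSpanCPTP_of_isSelfAdjoint hd hr (ℑ C).2 him))

end Span

/-- the complex dimension of the span of CPTP maps `M_d → M_r`
equals `d²r² − d² + 1`. -/
theorem finrank_span_CPTP (d r : ℕ) (hd : 0 < d) (hr : 0 < r) :
    Module.finrank ℂ
      (Submodule.span ℂ
        {ψ : Matrix (Fin d) (Fin d) ℂ →ₗ[ℂ] Matrix (Fin r) (Fin r) ℂ | IsCPTP ψ}) =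
      d ^ 2 * r ^ 2 - d ^ 2 + 1 := by
  rw [(Submodule.equivMapOfInjective _ choiLinearMap_injective _).finrank_eq]
  change Module.finrank ℂ (choiSpanCPTP d r) = _
  rw [choiSpanCPTP_eq_Ssub hd hr, finrank_Ssub hd hr]

end
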